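/- On su(2) ⊕ su(2) with dual basis E¹,E²,E³,F¹,F²,F³ satisfying dE¹ = −2E²∧E³, dE² = 2E¹∧E³, dE³ = −2E¹∧E², dF¹ = −2F²∧F³, dF² = 2F¹∧F³, dF³ = −2F¹∧F², the complex forms ψ¹ = E¹+iE², ψ² = F¹+iF², ψ³ = E³+iF³ satisfy dψ¹ = iψ¹∧ψ³ + iψ¹∧ψ̄³, dψ² = ψ²∧ψ³ − ψ²∧ψ̄³, dψ³ = −iψ¹∧ψ̄¹ + ψ²∧ψ̄². -/

import Mathlib

/-!
The first two equations only use the derivatives of `E¹, E²` (resp. `F¹, F²`) together with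
`ψ³ + ψ̄³ = 2E³` and `ψ³ − ψ̄³ = 2iF³`. The third one rests on `ψ¹ψ̄¹ = −2i E¹E²` and
`ψ²ψ̄² = −2i F¹F²`, which hold because anticommuting one-forms square to zero.
-/

theorem eq_zero_of_eq_neg (K : Type*) {M : Type*} [DivisionRing K] [CharZero K]
    [AddCommGroup M] [Module K M] {x : M} (h : x = -x) : x = 0 := by
  have h2 : (2 : K) • x = 0 := by rw [two_smul]; nth_rw 2 [h]; exact add_neg_cancel x
  exact (smul_eq_zero.mp h2).resolve_left two_ne_zero

theorem add_smul_mul_sub_smul_of_anticomm {R A : Type*} [CommRing R] [Ring A] [Algebra R A]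
    {a b : A} (ha : a * a = 0) (hb : b * b = 0) (hba : b * a = -(a * b)) (c : R) :
    (a + c • b) * (a - c • b) = -(2 * c) • (a * b) := by
  simp only [add_mul, mul_sub, smul_mul_assoc, mul_smul_comm, ha, hb, hba]
  module

/-- On `su(2) ⊕ su(2)` with dual basis `E¹,E²,E³,F¹,F²,F³`
satisfying `dE¹ = −2E²∧E³`, `dE² = 2E¹∧E³`, `dE³ = −2E¹∧E²`,
`dF¹ = −2F²∧F³`, `dF² = 2F¹∧F³`, `dF³ = −2F¹∧F²`, the complex forms
`ψ¹ = E¹+iE²`, `ψ² = F¹+iF²`, `ψ³ = E³+iF³` satisfy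
`dψ¹ = iψ¹∧ψ³ + iψ¹∧ψ̄³`, `dψ² = ψ²∧ψ³ − ψ²∧ψ̄³`,
`dψ³ = −iψ¹∧ψ̄¹ + ψ²∧ψ̄²`  (where `ψ̄¹ = E¹−iE²`, `ψ̄² = F¹−iF²`,
`ψ̄³ = E³−iF³`). -/
theorem calabi_eckmann_structure_equations
    {A : Type*} [Ring A] [Algebra ℂ A]
    (e1 e2 e3 f1 f2 f3 : A) (d : A →ₗ[ℂ] A)
    (hanti : ∀ x ∈ ({e1, e2, e3, f1, f2, f3} : Set A),
      ∀ y ∈ ({e1, e2, e3, f1, f2, f3} : Set A), x * y = -(y * x))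
    (he1 : d e1 = (-2 : ℂ) • (e2 * e3)) (he2 : d e2 = (2 : ℂ) • (e1 * e3))
    (he3 : d e3 = (-2 : ℂ) • (e1 * e2))
    (hf1 : d f1 = (-2 : ℂ) • (f2 * f3)) (hf2 : d f2 = (2 : ℂ) • (f1 * f3))
    (hf3 : d f3 = (-2 : ℂ) • (f1 * f2))
    (ψ1 ψ2 ψ3 ψb1 ψb2 ψb3 : A)
    (hψ1 : ψ1 = e1 + Complex.I • e2) (hψ2 : ψ2 = f1 + Complex.I • f2)
    (hψ3 : ψ3 = e3 + Complex.I • f3)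
    (hψb1 : ψb1 = e1 - Complex.I • e2) (hψb2 : ψb2 = f1 - Complex.I • f2)
    (hψb3 : ψb3 = e3 - Complex.I • f3) :
    d ψ1 = Complex.I • (ψ1 * ψ3) + Complex.I • (ψ1 * ψb3) ∧
    d ψ2 = ψ2 * ψ3 - ψ2 * ψb3 ∧
    d ψ3 = -(Complex.I • (ψ1 * ψb1)) + ψ2 * ψb2 := by
  have hsq : ∀ x ∈ ({e1, e2, e3, f1, f2, f3} : Set A), x * x = 0 :=
    fun x hx => eq_zero_of_eq_neg ℂ (hanti x hx x hx)
  have hψ3_add : ψ3 + ψb3 = (2 : ℂ) • e3 := by rw [hψ3, hψb3]; module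
  have hψ3_sub : ψ3 - ψb3 = (2 * Complex.I) • f3 := by rw [hψ3, hψb3]; module
  have hψ1_mul : ψ1 * ψb1 = -(2 * Complex.I) • (e1 * e2) := by
    rw [hψ1, hψb1]
    exact add_smul_mul_sub_smul_of_anticomm (hsq e1 (by simp)) (hsq e2 (by simp))
      (hanti e2 (by simp) e1 (by simp)) Complex.I
  have hψ2_mul : ψ2 * ψb2 = -(2 * Complex.I) • (f1 * f2) := by
    rw [hψ2, hψb2]
    exact add_smul_mul_sub_smul_of_anticomm (hsq f1 (by simp)) (hsq f2 (by simp))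
      (hanti f2 (by simp) f1 (by simp)) Complex.I
  refine ⟨?_, ?_, ?_⟩
  · rw [← smul_add, ← mul_add, hψ3_add, hψ1, map_add, map_smul, he1, he2]
    simp only [add_mul, smul_mul_assoc, mul_smul_comm]
    linear_combination (norm := module) Complex.I_mul_I • ((-2 : ℂ) • (e2 * e3))
  · rw [← mul_sub, hψ3_sub, hψ2, map_add, map_smul, hf1, hf2]
    simp only [add_mul, smul_mul_assoc, mul_smul_comm]
    linear_combination (norm := module) Complex.I_mul_I • ((-2 : ℂ) • (f2 * f3))
  · rw [hψ1_mul, hψ2_mul, hψ3, map_add, map_smul, he3, hf3]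
    linear_combination (norm := module) Complex.I_mul_I • ((-2 : ℂ) • (e1 * e2))
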